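/- arXiv:2305.02849 — 3 statements merged into one kernel-verified Lean document; each statement's English description precedes it below -/
import Mathlib

section
/- Let M ≥ 1 and let R : Fin (M+1) → {0,1} be a monotone dropout indicator sequence with R 1 = 1 and R_j = 0 implying R_t = 0 for all t > j. Define the censoring indicator C_j = R_j * (1 - R_{j+1}) for j < M and C_M = R_M, let λ : Fin (M+1) → ℝ with each λ_j ∈ [0,1), and let π_j = ∏_{t=1}^{j} (1 - λ_t). With the conventions π_{M+1} = π_M and λ_{M+1} = 0, for every l with 1 ≤ l ≤ M we have ∑_{j=l}^{M} (C_j - λ_{j+1} R_j)/π_{j+1} = R_l / π_l. -/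
/-- Monotone dropout telescoping identity:
∑_{j=l}^{M} (C_j - λ_{j+1} R_j)/π_{j+1} = R_l / π_l. -/
theorem monotone_dropout_weight_sum
    (M : ℕ) (hM : 1 ≤ M) (R C lam pi : ℕ → ℝ)
    (hRbin : ∀ j, R j = 0 ∨ R j = 1)
    (hR1 : R 1 = 1)
    (hmono : ∀ j t, R j = 0 → j < t → R t = 0)
    (hC : ∀ j, j < M → C j = R j * (1 - R (j + 1)))
    (hCM : C M = R M)
    (hlam : ∀ j, 0 ≤ lam j ∧ lam j < 1)
    (hlamM1 : lam (M + 1) = 0)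
    (hpi : ∀ j, pi j = ∏ t ∈ Finset.Icc 1 j, (1 - lam t))
    (l : ℕ) (hl : 1 ≤ l) (hlM : l ≤ M) :
    ∑ j ∈ Finset.Icc l M, (C j - lam (j + 1) * R j) / pi (j + 1) = R l / pi l := by
  have pi_pos : ∀ j, 0 < pi j := by
    intro j
    rw [hpi]
    exact Finset.prod_pos (fun t _ => by linarith [(hlam t).2])
  have pi_succ : ∀ j, pi (j + 1) = pi j * (1 - lam (j + 1)) := by
    intro j
    rw [hpi, hpi, Finset.prod_Icc_succ_top (Nat.le_add_left 1 j)]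
  have RR : ∀ j, R j * R (j + 1) = R (j + 1) := by
    intro j
    rcases hRbin j with h | h
    · rw [h, hmono j (j + 1) h (Nat.lt_succ_self j), mul_zero]
    · rw [h, one_mul]
  have key : ∀ n : ℕ, ∀ l : ℕ, 1 ≤ l → l ≤ M → M - l ≤ n →
      ∑ j ∈ Finset.Icc l M, (C j - lam (j + 1) * R j) / pi (j + 1) = R l / pi l := by
    intro n
    induction n with
    | zero =>
      intro l hl hlM hn
      have : l = M := le_antisymm hlM (by omega)
      subst this
      rw [Finset.Icc_self, Finset.sum_singleton, hCM, hlamM1, zero_mul, sub_zero,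
        pi_succ, hlamM1, sub_zero, mul_one]
    | succ n ih =>
      intro l hl hlM hn
      rcases eq_or_lt_of_le hlM with heq | hlt
      · subst heq
        rw [Finset.Icc_self, Finset.sum_singleton, hCM, hlamM1, zero_mul, sub_zero,
          pi_succ, hlamM1, sub_zero, mul_one]
      · have hsplit : Finset.Icc l M = insert l (Finset.Icc (l + 1) M) := by
          ext x; simp [Finset.mem_Icc, Finset.mem_insert]; omega
        rw [hsplit, Finset.sum_insert (by simp), ih (l + 1) (by omega) hlt (by omega)]
        have hpl : pi l ≠ 0 := ne_of_gt (pi_pos l)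
        have hpl1 : (1 : ℝ) - lam (l + 1) ≠ 0 := by
          have := (hlam (l + 1)).2; intro h; linarith
        rw [hC l hlt, pi_succ l]
        field_simp
        linear_combination - RR l
  exact key (M - l) l hl hlM (le_refl _)
end

section
/- Let X be a random variable, Y an integrable real random variable, R a {0,1}-valued random variable, and suppose the true propensity π(X) = P(R=1 | X) ≥ ε > 0 and MAR holds: P(R=1 | X, Y) = π(X). Let m*(X) be any bounded measurable function of X (a possibly misspecified outcome regression). Then the AIPW quantity satisfies E[ R·Y/π(X) + (1 - R/π(X))·m*(X) ] = E[Y]. -/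
open MeasureTheory ProbabilityTheory

section Aux

variable {Ω : Type*} {m' : MeasurableSpace Ω} [mΩ : MeasurableSpace Ω] [StandardBorelSpace Ω]
  {μ : Measure Ω} [IsFiniteMeasure μ] {hm' : m' ≤ mΩ}

lemma aux_condIndepFun_ae_indepFun {R Y : Ω → ℝ} (hR : Measurable R) (hY : Measurable Y)
    (h : CondIndepFun m' hm' R Y μ) :
    ∀ᵐ ω ∂μ, IndepFun R Y (condExpKernel μ m' ω) := by
  have h' := Kernel.indepFun_iff_measure_inter_preimage_eq_mul.mp h
  have hae : ∀ᵐ ω ∂(μ.trim hm'), ∀ p q : ℚ,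
      condExpKernel μ m' ω (R ⁻¹' Set.Iio (p : ℝ) ∩ Y ⁻¹' Set.Iio (q : ℝ))
        = condExpKernel μ m' ω (R ⁻¹' Set.Iio (p : ℝ))
          * condExpKernel μ m' ω (Y ⁻¹' Set.Iio (q : ℝ)) := by
    rw [ae_all_iff]
    intro p
    rw [ae_all_iff]
    intro q
    exact h' _ _ measurableSet_Iio measurableSet_Iio
  refine ae_of_ae_trim hm' ?_
  filter_upwards [hae] with ω hω
  haveI : IsProbabilityMeasure (condExpKernel μ m' ω) := IsMarkovKernel.isProbabilityMeasure ω
  have hgen : (inferInstance : MeasurableSpace ℝ)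
      = MeasurableSpace.generateFrom (⋃ a : ℚ, {Set.Iio (a : ℝ)}) :=
    BorelSpace.measurable_eq.trans Real.borel_eq_generateFrom_Iio_rat
  have him : ∀ (f : Ω → ℝ), Set.preimage f '' (⋃ a : ℚ, {Set.Iio (a : ℝ)})
      = {s | ∃ t ∈ ⋃ a : ℚ, {Set.Iio (a : ℝ)}, f ⁻¹' t = s} := by
    intro f; ext s; simp [Set.mem_image]
  have hI : Indep (MeasurableSpace.comap R inferInstance)
      (MeasurableSpace.comap Y inferInstance) (condExpKernel μ m' ω) := by
    refine IndepSets.indep hR.comap_le hY.comap_le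
      (Real.isPiSystem_Iio_rat.comap R) (Real.isPiSystem_Iio_rat.comap Y) ?_ ?_ ?_
    · rw [hgen, MeasurableSpace.comap_generateFrom, him]
    · rw [hgen, MeasurableSpace.comap_generateFrom, him]
    · rw [IndepSets_iff]
      rintro _ _ ⟨s, hs, rfl⟩ ⟨t, ht, rfl⟩
      simp only [Set.mem_iUnion, Set.mem_singleton_iff] at hs ht
      obtain ⟨p, rfl⟩ := hs
      obtain ⟨q, rfl⟩ := ht
      exact hω p q
  rw [indepFun_iff_measure_inter_preimage_eq_mul]
  intro s t hs ht
  exact (Indep_iff _ _ _).mp hI _ _ ⟨s, hs, rfl⟩ ⟨t, ht, rfl⟩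

end Aux

section Aux2

variable {Ω : Type*} {m' : MeasurableSpace Ω} [mΩ : MeasurableSpace Ω] [StandardBorelSpace Ω]
  {μ : Measure Ω} [IsFiniteMeasure μ] {hm' : m' ≤ mΩ}

lemma aux_condexp_mul {R Y : Ω → ℝ} (hR : Measurable R) (hY : Measurable Y)
    (hRint : Integrable R μ) (hYint : Integrable Y μ)
    (hRYint : Integrable (fun ω => R ω * Y ω) μ)
    (h : CondIndepFun m' hm' R Y μ) :
    μ[fun ω => R ω * Y ω|m'] =ᵐ[μ] fun ω => (μ[R|m']) ω * (μ[Y|m']) ω := by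
  have h1 := condExp_ae_eq_integral_condExpKernel hm' hRYint
  have h2 := condExp_ae_eq_integral_condExpKernel hm' hRint
  have h3 := condExp_ae_eq_integral_condExpKernel hm' hYint
  have h4 := aux_condIndepFun_ae_indepFun hR hY h
  filter_upwards [h1, h2, h3, h4] with ω e1 e2 e3 e4
  rw [e1, e2, e3]
  have := e4.integral_mul_eq_mul_integral hR.aestronglyMeasurable hY.aestronglyMeasurable
  simpa [Pi.mul_apply] using this

end Aux2

/-- Double robustness of the AIPW estimator, case (a): with the true propensity
π(X) = P(R=1|X) ≥ ε > 0, MAR (R ⟂ Y | X), and m* any bounded measurable function of X,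
E[R·Y/π(X) + (1 - R/π(X))·m*(X)] = E[Y]. -/
theorem aipw_double_robust_correct_propensity
    {Ω : Type*} [mΩ : MeasurableSpace Ω] [StandardBorelSpace Ω]
    (μ : Measure Ω) [IsProbabilityMeasure μ]
    (X Y R : Ω → ℝ)
    (hX : Measurable X) (hY : Measurable Y) (hR : Measurable R)
    (hYint : Integrable Y μ)
    (hRbin : ∀ ω, R ω = 0 ∨ R ω = 1)
    (ε : ℝ) (hε : 0 < ε)
    (hπ : ∀ᵐ ω ∂μ, ε ≤ (μ[R | MeasurableSpace.comap X inferInstance]) ω)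
    (hMAR : CondIndepFun (MeasurableSpace.comap X inferInstance) hX.comap_le R Y μ)
    (mstar : Ω → ℝ)
    (hmstar : Measurable[MeasurableSpace.comap X inferInstance] mstar)
    (Cb : ℝ) (hmstarBd : ∀ ω, |mstar ω| ≤ Cb) :
    ∫ ω, R ω * Y ω / (μ[R | MeasurableSpace.comap X inferInstance]) ω
        + (1 - R ω / (μ[R | MeasurableSpace.comap X inferInstance]) ω) * mstar ω ∂μ
      = ∫ ω, Y ω ∂μ := by
  have hne : Nonempty Ω := by
    by_contra h
    rw [not_nonempty_iff] at h
    have h1 : μ Set.univ = 1 := measure_univ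
    rw [Set.univ_eq_empty_iff.mpr h, measure_empty] at h1
    exact zero_ne_one h1
  have hG : MeasurableSpace.comap X inferInstance ≤ mΩ := hX.comap_le
  set p : Ω → ℝ := μ[R|MeasurableSpace.comap X inferInstance] with hpdef
  -- basic facts
  have hRbd : ∀ ω, ‖R ω‖ ≤ 1 := fun ω => by rcases hRbin ω with h | h <;> simp [h]
  have hRint : Integrable R μ :=
    (integrable_const (1 : ℝ)).mono' hR.aestronglyMeasurable (Filter.Eventually.of_forall hRbd)
  have hRYint : Integrable (fun ω => R ω * Y ω) μ :=
    hYint.bdd_mul hR.aestronglyMeasurable (Filter.Eventually.of_forall hRbd)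
  have hppos : ∀ᵐ ω ∂μ, 0 < p ω := hπ.mono fun ω h => lt_of_lt_of_le hε h
  have hpm : StronglyMeasurable[MeasurableSpace.comap X inferInstance] p :=
    stronglyMeasurable_condExp
  have hinvsm : StronglyMeasurable[MeasurableSpace.comap X inferInstance] (fun ω => (p ω)⁻¹) :=
    (hpm.measurable.inv).stronglyMeasurable
  have hinv_asm : AEStronglyMeasurable (fun ω => (p ω)⁻¹) μ :=
    (((hpm.mono hG).measurable.inv).stronglyMeasurable).aestronglyMeasurable
  have hinv_bd : ∀ᵐ ω ∂μ, ‖(p ω)⁻¹‖ ≤ ε⁻¹ := by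
    filter_upwards [hπ] with ω h
    rw [Real.norm_eq_abs, abs_of_nonneg (inv_nonneg.mpr (le_trans hε.le h))]
    exact inv_anti₀ hε h
  -- product rule from conditional independence
  have hmul : μ[fun ω => R ω * Y ω|MeasurableSpace.comap X inferInstance]
      =ᵐ[μ] fun ω => p ω * (μ[Y|MeasurableSpace.comap X inferInstance]) ω :=
    aux_condexp_mul hR hY hRint hYint hRYint hMAR
  -- Term 1
  have hT1int : Integrable (fun ω => (p ω)⁻¹ * (R ω * Y ω)) μ :=
    hRYint.bdd_mul hinv_asm hinv_bd
  have pull1 : μ[fun ω => (p ω)⁻¹ * (R ω * Y ω)|MeasurableSpace.comap X inferInstance]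
      =ᵐ[μ] fun ω => (p ω)⁻¹ *
        (μ[fun ω => R ω * Y ω|MeasurableSpace.comap X inferInstance]) ω :=
    condExp_stronglyMeasurable_mul_of_bound hG hinvsm hRYint ε⁻¹ hinv_bd
  have hT1val : ∫ ω, (p ω)⁻¹ * (R ω * Y ω) ∂μ = ∫ ω, Y ω ∂μ := by
    rw [← integral_condExp hG (f := fun ω => (p ω)⁻¹ * (R ω * Y ω))]
    rw [integral_congr_ae pull1]
    have e : (fun ω => (p ω)⁻¹ *
          (μ[fun ω => R ω * Y ω|MeasurableSpace.comap X inferInstance]) ω)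
        =ᵐ[μ] μ[Y|MeasurableSpace.comap X inferInstance] := by
      filter_upwards [hmul, hppos] with ω h1 h2
      rw [h1]
      field_simp
    rw [integral_congr_ae e, integral_condExp hG]
  -- Term 2
  have hmsm : StronglyMeasurable[MeasurableSpace.comap X inferInstance] mstar :=
    hmstar.stronglyMeasurable
  have hCb0 : 0 ≤ Cb := le_trans (abs_nonneg _) (hmstarBd (Classical.arbitrary _))
  have hmint : Integrable mstar μ :=
    (integrable_const Cb).mono' ((hmsm.mono hG).aestronglyMeasurable)
      (Filter.Eventually.of_forall fun ω => by
        rw [Real.norm_eq_abs]; exact hmstarBd ω)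
  have hgsm : StronglyMeasurable[MeasurableSpace.comap X inferInstance]
      (fun ω => mstar ω * (p ω)⁻¹) := hmsm.mul hinvsm
  have hg_bd : ∀ᵐ ω ∂μ, ‖mstar ω * (p ω)⁻¹‖ ≤ Cb * ε⁻¹ := by
    filter_upwards [hinv_bd] with ω h
    rw [norm_mul]
    exact mul_le_mul (by rw [Real.norm_eq_abs]; exact hmstarBd ω) h (norm_nonneg _) hCb0
  have hgRint : Integrable (fun ω => mstar ω * (p ω)⁻¹ * R ω) μ :=
    hRint.bdd_mul ((hgsm.mono hG).aestronglyMeasurable) hg_bd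
  have pull2 : μ[fun ω => mstar ω * (p ω)⁻¹ * R ω|MeasurableSpace.comap X inferInstance]
      =ᵐ[μ] fun ω => mstar ω * (p ω)⁻¹ * p ω :=
    condExp_stronglyMeasurable_mul_of_bound hG hgsm hRint (Cb * ε⁻¹) hg_bd
  have hT2val : ∫ ω, mstar ω * (p ω)⁻¹ * R ω ∂μ = ∫ ω, mstar ω ∂μ := by
    rw [← integral_condExp hG (f := fun ω => mstar ω * (p ω)⁻¹ * R ω)]
    rw [integral_congr_ae pull2]
    refine integral_congr_ae ?_
    filter_upwards [hppos] with ω h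
    field_simp
  -- assemble
  have hsubint : Integrable (fun ω => mstar ω - mstar ω * (p ω)⁻¹ * R ω) μ :=
    hmint.sub hgRint
  have hsplit : (fun ω => R ω * Y ω / p ω + (1 - R ω / p ω) * mstar ω)
      = fun ω => (p ω)⁻¹ * (R ω * Y ω) + (mstar ω - mstar ω * (p ω)⁻¹ * R ω) := by
    funext ω
    rw [div_eq_mul_inv, div_eq_mul_inv]
    ring
  rw [hsplit, integral_add hT1int hsubint, integral_sub hmint hgRint,
    hT2val, sub_self, add_zero, hT1val]
end

section
/- Let X be a random variable, Y an integrable real random variable, R a {0,1}-valued random variable with MAR: P(R=1 | X, Y) = π(X) ≥ ε > 0 for the true propensity π. Let π* be any measurable function of X with ε ≤ π*(X) ≤ 1 (a possibly misspecified propensity model), and let m(X) = E[Y | X] be the correct outcome regression. Then E[ R·Y/π*(X) + (1 - R/π*(X))·m(X) ] = E[Y]. -/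
open MeasureTheory ProbabilityTheory Set

/-- If `R` and `Y` are conditionally independent given `m'`, with `R` binary and `Y`
integrable, then `μ[R·Y | m'] = μ[R|m'] · μ[Y|m']` a.e. -/
lemma aipw_condexp_mul
    {Ω : Type*} {m' : MeasurableSpace Ω} [mΩ : MeasurableSpace Ω] [StandardBorelSpace Ω]
    {μ : Measure Ω} [IsProbabilityMeasure μ] (hm' : m' ≤ mΩ)
    {R Y : Ω → ℝ} (hR : Measurable R) (hY : Measurable Y)
    (hRbin : ∀ ω, R ω = 0 ∨ R ω = 1)
    (hYint : Integrable Y μ)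
    (hMAR : CondIndepFun m' hm' R Y μ) :
    μ[fun ω => R ω * Y ω | m'] =ᵐ[μ] fun ω => (μ[R|m']) ω * (μ[Y|m']) ω := by
  set κ := condExpKernel μ m' with hκ
  set A : Set Ω := R ⁻¹' {1} with hA
  have hAmeas : MeasurableSet A := hR (measurableSet_singleton 1)
  have hRbd : ∀ ω, ‖R ω‖ ≤ 1 := fun ω => by rcases hRbin ω with h | h <;> simp [h]
  have hRint : Integrable R μ :=
    (integrable_const (1:ℝ)).mono' hR.aestronglyMeasurable (ae_of_all _ hRbd)
  have hRYint : Integrable (fun ω => R ω * Y ω) μ :=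
    hYint.bdd_mul hR.aestronglyMeasurable (ae_of_all _ hRbd)
  have hindep : ∀ q : ℚ, ∀ᵐ ω ∂μ,
      κ ω (A ∩ Y ⁻¹' Iic (q:ℝ)) = κ ω A * κ ω (Y ⁻¹' Iic (q:ℝ)) := fun q =>
    ae_of_ae_trim hm'
      (hMAR.measure_inter_preimage_eq_mul {1} (Iic (q:ℝ)) (measurableSet_singleton 1)
        measurableSet_Iic)
  have hindepAll : ∀ᵐ ω ∂μ, ∀ q : ℚ,
      κ ω (A ∩ Y ⁻¹' Iic (q:ℝ)) = κ ω A * κ ω (Y ⁻¹' Iic (q:ℝ)) := ae_all_iff.2 hindep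
  have hYk : ∀ᵐ ω ∂μ, Integrable Y (κ ω) := hYint.condExpKernel_ae
  have hcY := condExp_ae_eq_integral_condExpKernel hm' hYint
  have hcR := condExp_ae_eq_integral_condExpKernel hm' hRint
  have hcRY := condExp_ae_eq_integral_condExpKernel hm' hRYint
  filter_upwards [hindepAll, hYk, hcY, hcR, hcRY] with ω hind hYkω hcYω hcRω hcRYω
  rw [hcRYω, hcYω, hcRω]
  have hprob : IsProbabilityMeasure (κ ω) := IsMarkovKernel.isProbabilityMeasure ω
  -- pointwise : R y * Y y = A.indicator Y y, R = A.indicator 1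
  have hmulind : ∀ y, R y * Y y = A.indicator Y y := by
    intro y
    rcases hRbin y with h | h
    · have hy : y ∉ A := by simp [hA, h]
      simp [h, indicator_of_notMem hy]
    · have hy : y ∈ A := by simp [hA, h]
      simp [h, indicator_of_mem hy]
  have hRind : ∀ y, R y = A.indicator (fun _ => (1:ℝ)) y := by
    intro y
    rcases hRbin y with h | h
    · have hy : y ∉ A := by simp [hA, h]
      simp [h, indicator_of_notMem hy]
    · have hy : y ∈ A := by simp [hA, h]
      simp [h, indicator_of_mem hy]
  -- the two pushforward measures agree
  set ν₁ : Measure ℝ := Measure.map Y ((κ ω).restrict A) with hν₁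
  set ν₂ : Measure ℝ := (κ ω A) • (Measure.map Y (κ ω)) with hν₂
  haveI : IsFiniteMeasure ν₁ := by
    rw [hν₁]; exact Measure.isFiniteMeasure_map _ _
  haveI : IsFiniteMeasure (Measure.map Y (κ ω)) := Measure.isFiniteMeasure_map _ _
  have hmeasEq : ν₁ = ν₂ := by
    refine MeasureTheory.ext_of_generate_finite _
      (BorelSpace.measurable_eq.trans Real.borel_eq_generateFrom_Iic_rat)
      Real.isPiSystem_Iic_rat ?_ ?_
    · rintro s hs
      simp only [mem_iUnion, mem_singleton_iff] at hs
      obtain ⟨q, rfl⟩ := hs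
      rw [hν₁, Measure.map_apply hY measurableSet_Iic,
        Measure.restrict_apply (hY measurableSet_Iic), hν₂]
      simp only [Measure.smul_apply, Measure.map_apply hY measurableSet_Iic, smul_eq_mul]
      rw [inter_comm]
      exact hind q
    · rw [hν₁, hν₂]
      simp only [Measure.map_apply hY MeasurableSet.univ, Measure.smul_apply, smul_eq_mul,
        preimage_univ, Measure.restrict_apply_univ, measure_univ, mul_one]
  -- compute the integrals
  have hAint : ∫ y, R y * Y y ∂(κ ω) = ∫ y in A, Y y ∂(κ ω) := by
    rw [← integral_indicator hAmeas]
    exact integral_congr_ae (ae_of_all _ hmulind)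
  have hmap1 : ∫ y in A, Y y ∂(κ ω) = ∫ x, x ∂ν₁ := by
    rw [hν₁]
    exact (integral_map hY.aemeasurable aestronglyMeasurable_id).symm
  have hmap2 : ∫ x, x ∂ν₂ = (κ ω A).toReal * ∫ y, Y y ∂(κ ω) := by
    rw [hν₂, integral_smul_measure, smul_eq_mul]
    congr 1
    exact integral_map hY.aemeasurable aestronglyMeasurable_id
  have hRInt : ∫ y, R y ∂(κ ω) = (κ ω A).toReal := by
    rw [integral_congr_ae (ae_of_all _ hRind), integral_indicator hAmeas,
      setIntegral_const, smul_eq_mul, mul_one, measureReal_def]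
  rw [hAint, hmap1, hmeasEq, hmap2, hRInt]

/-- Double robustness of the AIPW estimator, case (b): with MAR (R ⟂ Y | X) and true
propensity π(X) = P(R=1|X) ≥ ε > 0, any measurable working propensity π* of X with
ε ≤ π*(X) ≤ 1, and the correct outcome regression m(X) = E[Y|X],
E[R·Y/π*(X) + (1 - R/π*(X))·m(X)] = E[Y]. -/
theorem aipw_double_robust_correct_outcome
    {Ω : Type*} [mΩ : MeasurableSpace Ω] [StandardBorelSpace Ω]
    (μ : Measure Ω) [IsProbabilityMeasure μ]
    (X Y R : Ω → ℝ)
    (hX : Measurable X) (hY : Measurable Y) (hR : Measurable R)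
    (hYint : Integrable Y μ)
    (hRbin : ∀ ω, R ω = 0 ∨ R ω = 1)
    (ε : ℝ) (hε : 0 < ε)
    (hπ : ∀ᵐ ω ∂μ, ε ≤ (μ[R | MeasurableSpace.comap X inferInstance]) ω)
    (hMAR : CondIndepFun (MeasurableSpace.comap X inferInstance) hX.comap_le R Y μ)
    (pistar : Ω → ℝ)
    (hpistar : Measurable[MeasurableSpace.comap X inferInstance] pistar)
    (hpistarBd : ∀ ω, ε ≤ pistar ω ∧ pistar ω ≤ 1) :
    ∫ ω, R ω * Y ω / pistar ω
        + (1 - R ω / pistar ω) * (μ[Y | MeasurableSpace.comap X inferInstance]) ω ∂μ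
      = ∫ ω, Y ω ∂μ := by
  set m' : MeasurableSpace Ω := MeasurableSpace.comap X inferInstance with hm'def
  have hm' : m' ≤ mΩ := hX.comap_le
  set mY : Ω → ℝ := μ[Y | m'] with hmY
  set g : Ω → ℝ := fun ω => (pistar ω)⁻¹ with hg
  have hpistar0 : ∀ ω, 0 < pistar ω := fun ω => lt_of_lt_of_le hε (hpistarBd ω).1
  have hgM : Measurable[m'] g := hpistar.inv
  have hgSM : StronglyMeasurable[m'] g := hgM.stronglyMeasurable
  have hgAESM : AEStronglyMeasurable[mΩ] g μ :=
    ((hgM.mono hm' le_rfl)).aestronglyMeasurable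
  have hgbd : ∀ ω, ‖g ω‖ ≤ ε⁻¹ := by
    intro ω
    rw [hg, Real.norm_eq_abs, abs_of_pos (inv_pos.2 (hpistar0 ω))]
    exact inv_anti₀ hε (hpistarBd ω).1
  have hRbd : ∀ ω, ‖R ω‖ ≤ 1 := fun ω => by rcases hRbin ω with h | h <;> simp [h]
  have hmYint : Integrable mY μ := integrable_condExp
  have hRint : Integrable R μ :=
    (integrable_const (1:ℝ)).mono' hR.aestronglyMeasurable (ae_of_all _ hRbd)
  have hRYint : Integrable (fun ω => R ω * Y ω) μ :=
    hYint.bdd_mul hR.aestronglyMeasurable (ae_of_all _ hRbd)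
  have hI1 : Integrable (fun ω => g ω * (R ω * Y ω)) μ :=
    hRYint.bdd_mul hgAESM (ae_of_all _ hgbd)
  have hgmint : Integrable (fun ω => g ω * mY ω) μ :=
    hmYint.bdd_mul hgAESM (ae_of_all _ hgbd)
  have hI2 : Integrable (fun ω => g ω * mY ω * R ω) μ := by
    have := hgmint.bdd_mul hR.aestronglyMeasurable (ae_of_all _ hRbd)
    -- this : Integrable fun ω => R ω * (g ω * mY ω)
    exact this.congr (ae_of_all _ fun ω => by ring)
  -- rewrite the integrand
  have hrw : ∀ ω, R ω * Y ω / pistar ω + (1 - R ω / pistar ω) * mY ω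
      = g ω * (R ω * Y ω) - g ω * mY ω * R ω + mY ω := by
    intro ω
    rw [hg]
    field_simp
    ring
  have hI12 : Integrable (fun ω => g ω * (R ω * Y ω) - g ω * mY ω * R ω) μ := hI1.sub hI2
  rw [integral_congr_ae (ae_of_all _ hrw), integral_add hI12 hmYint,
    integral_sub hI1 hI2, hmY, integral_condExp hm']
  -- it remains to show the correction term vanishes
  have hkey := aipw_condexp_mul (mΩ := mΩ) hm' hR hY hRbin hYint hMAR
  -- ∫ g·(R·Y) = ∫ g · μ[R|m'] · mY
  have e1 : ∫ ω, g ω * (R ω * Y ω) ∂μ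
      = ∫ ω, g ω * ((μ[R|m']) ω * mY ω) ∂μ := by
    have hpull := condExp_mul_of_stronglyMeasurable_left (μ := μ) (m := m') hgSM
      (by simpa [Pi.mul_def] using hI1) hRYint
    calc ∫ ω, g ω * (R ω * Y ω) ∂μ
        = ∫ ω, (μ[(g * fun ω => R ω * Y ω : Ω → ℝ) | m']) ω ∂μ := by
          rw [integral_condExp hm']; rfl
      _ = ∫ ω, g ω * ((μ[R|m']) ω * mY ω) ∂μ := by
          refine integral_congr_ae ?_
          filter_upwards [hpull, hkey] with ω h1 h2
          simp only [Pi.mul_apply] at h1 ⊢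
          rw [h1, h2]
  -- ∫ (g·mY)·R = ∫ g · mY · μ[R|m']
  have e2 : ∫ ω, g ω * mY ω * R ω ∂μ
      = ∫ ω, g ω * ((μ[R|m']) ω * mY ω) ∂μ := by
    have hgmSM : StronglyMeasurable[m'] (fun ω => g ω * mY ω) :=
      hgSM.mul stronglyMeasurable_condExp
    have hpull := condExp_mul_of_stronglyMeasurable_left (μ := μ) (m := m') hgmSM
      (by simpa [Pi.mul_def] using hI2) hRint
    calc ∫ ω, g ω * mY ω * R ω ∂μ
        = ∫ ω, (μ[((fun ω => g ω * mY ω) * R : Ω → ℝ) | m']) ω ∂μ := by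
          rw [integral_condExp hm']; rfl
      _ = ∫ ω, g ω * ((μ[R|m']) ω * mY ω) ∂μ := by
          refine integral_congr_ae ?_
          filter_upwards [hpull] with ω h1
          simp only [Pi.mul_apply] at h1 ⊢
          rw [h1]; ring
  rw [e1, e2, sub_self, zero_add]
end
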